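/- arXiv:2510.16481 — 2 statements merged into one kernel-verified Lean document; each statement's English description precedes it below -/
import Mathlib

section
/- Let n = 2^m, and for an integer point v of the Hadamard polytope whose coefficient support T(v) is a linear subspace of F_2^m, define exp(v) = dim(supp(v)^⊥), so that the unique convex representation of v has all nonzero coefficients equal to 2^{-exp(v)}. Suppose v_1, …, v_d and u_1, …, u_d are integer points of Had with each T(v_i) and T(u_i) a linear subspace, and with exp(v_1) < exp(v_2) < ⋯ < exp(v_d) and exp(u_1) < ⋯ < exp(u_d). If v_1 + ⋯ + v_d = u_1 + ⋯ + u_d, then T(v_i) = T(u_i) for all i. -/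
open scoped BigOperators Classical

noncomputable section

/-- `F m` is the vector space `𝔽₂^m`. -/
abbrev F (m : ℕ) := Fin m → ZMod 2

/-- The standard dot product on `𝔽₂^m`. -/
def dotF {m : ℕ} (a b : F m) : ZMod 2 := ∑ i, a i * b i

/-- `had c` is the column of the Hadamard matrix indexed by `c`: `had c a = (-1)^⟨a,c⟩`. -/
def had {m : ℕ} (c : F m) : F m → ℝ := fun a => (-1 : ℝ) ^ (dotF a c).val

/-- The Hadamard polytope: the convex hull of the columns of the Hadamard matrix. -/
def Had (m : ℕ) : Set (F m → ℝ) := convexHull ℝ (Set.range (had (m := m)))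

/-- A vector has all integer coordinates. -/
def IsIntPoint {ι : Type*} (v : ι → ℝ) : Prop := ∀ a, ∃ z : ℤ, v a = z

/-- The integer point of the Hadamard polytope which is the uniform average of the
vertices indexed by the linear subspace `W` (its coefficient support `T(v)`). -/
def vSub {m : ℕ} (W : Submodule (ZMod 2) (F m)) : F m → ℝ := fun a =>
  ((Finset.univ.filter (fun c : F m => c ∈ W)).card : ℝ)⁻¹ *
    ∑ c ∈ Finset.univ.filter (fun c : F m => c ∈ W), had c a

lemma addF_self {m : ℕ} (c : F m) : c + c = 0 :=
  funext fun _ => CharTwo.add_self_eq_zero _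

lemma neg_one_pow_add (x y : ZMod 2) :
    ((-1:ℝ)) ^ (x + y).val = (-1:ℝ) ^ x.val * (-1:ℝ) ^ y.val := by
  have h : ∀ z : ZMod 2, z = 0 ∨ z = 1 := by decide
  rcases h x with rfl | rfl <;> rcases h y with rfl | rfl <;>
    norm_num [show ((0:ZMod 2)).val = 0 from rfl, show ((1:ZMod 2)).val = 1 from rfl,
      show ZMod.val (2 : ZMod 2) = 0 by decide]

lemma dotF_add_left {m : ℕ} (a a' b : F m) : dotF (a + a') b = dotF a b + dotF a' b := by
  simp [dotF, add_mul, Finset.sum_add_distrib]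

lemma dotF_add_right {m : ℕ} (a b b' : F m) : dotF a (b + b') = dotF a b + dotF a b' := by
  simp [dotF, mul_add, Finset.sum_add_distrib]

lemma dotF_single_left {m : ℕ} (j : Fin m) (b : F m) : dotF (Pi.single j 1) b = b j := by
  simp [dotF, Pi.single_apply, ite_mul]

lemma had_mul {m : ℕ} (c c' : F m) (a : F m) : had c a * had c' a = had (c + c') a := by
  unfold had
  rw [dotF_add_right, neg_one_pow_add]

lemma sum_had {m : ℕ} (b : F m) : ∑ a : F m, had b a = if b = 0 then ((2:ℝ)^m) else 0 := by
  split_ifs with h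
  · subst h
    have h1 : ∀ a : F m, had (0 : F m) a = 1 := by
      intro a; simp [had, dotF]
    simp only [h1, Finset.sum_const, Finset.card_univ, nsmul_eq_mul, mul_one]
    simp [Fintype.card_fun]
  · obtain ⟨j, hj⟩ : ∃ j, b j ≠ 0 := by
      by_contra h'; push_neg at h'; exact h (funext h')
    have hj1 : b j = 1 := by
      have h2 : ∀ x : ZMod 2, x ≠ 0 → x = 1 := by decide
      exact h2 _ hj
    apply Finset.sum_involution (g := fun a _ => a + Pi.single j 1)
    · intro a _
      have hdot : dotF (a + Pi.single j 1) b = dotF a b + 1 := by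
        rw [dotF_add_left, dotF_single_left, hj1]
      unfold had
      rw [hdot]
      have h3 : ∀ x : ZMod 2, x = 0 ∨ x = 1 := by decide
      rcases h3 (dotF a b) with h4 | h4 <;> rw [h4] <;>
        norm_num [show ((0:ZMod 2)).val = 0 from rfl, show ((1:ZMod 2)).val = 1 from rfl,
          show ZMod.val (2 : ZMod 2) = 0 by decide, show ((0:ZMod 2)+1) = 1 from rfl]
    · intro a _ _ heq
      have := congrFun heq j
      simp [Pi.single_apply] at this
    · intro a _
      rw [add_assoc, addF_self, add_zero]
    · intro a _; exact Finset.mem_univ _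

lemma sum_had_mul {m : ℕ} (c c₀ : F m) :
    ∑ a : F m, had c a * had c₀ a = if c = c₀ then ((2:ℝ)^m) else 0 := by
  simp only [had_mul]
  rw [sum_had]
  congr 1
  simp only [eq_iff_iff]
  constructor
  · intro h
    have h2 : c + c₀ + c₀ = c₀ := by rw [h, zero_add]
    rwa [add_assoc, addF_self, add_zero] at h2
  · rintro rfl
    exact addF_self _

lemma card_filter_mem {m : ℕ} (W : Submodule (ZMod 2) (F m)) :
    (Finset.univ.filter (fun c : F m => c ∈ W)).card = 2 ^ Module.finrank (ZMod 2) W := by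
  rw [← Fintype.card_subtype]
  have h1 : Fintype.card {c : F m // c ∈ W} = Fintype.card W := rfl
  rw [h1, Module.card_eq_pow_finrank (K := ZMod 2) (V := W), ZMod.card]

lemma sum_vSub_had {m : ℕ} (W : Submodule (ZMod 2) (F m)) (c₀ : F m) :
    ∑ a : F m, vSub W a * had c₀ a =
      (2:ℝ)^m * (if c₀ ∈ W then ((2:ℝ) ^ Module.finrank (ZMod 2) W)⁻¹ else 0) := by
  set filt := Finset.univ.filter (fun c : F m => c ∈ W) with hfilt
  calc ∑ a : F m, vSub W a * had c₀ a
      = ∑ a : F m, ∑ c ∈ filt, (filt.card:ℝ)⁻¹ * (had c a * had c₀ a) := by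
        apply Finset.sum_congr rfl; intro a _
        rw [vSub, ← hfilt, mul_assoc, Finset.sum_mul, Finset.mul_sum]
    _ = ∑ c ∈ filt, ∑ a : F m, (filt.card:ℝ)⁻¹ * (had c a * had c₀ a) := Finset.sum_comm
    _ = ∑ c ∈ filt, (filt.card:ℝ)⁻¹ * (if c = c₀ then (2:ℝ)^m else 0) := by
        apply Finset.sum_congr rfl; intro c _
        rw [← Finset.mul_sum, sum_had_mul]
    _ = (filt.card:ℝ)⁻¹ * (if c₀ ∈ W then (2:ℝ)^m else 0) := by
        rw [← Finset.mul_sum]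
        congr 1
        rw [Finset.sum_ite_eq' filt c₀ (fun _ => (2:ℝ)^m)]
        congr 1
        simp [hfilt]
    _ = (2:ℝ)^m * (if c₀ ∈ W then ((2:ℝ) ^ Module.finrank (ZMod 2) W)⁻¹ else 0) := by
        rw [card_filter_mem]
        split_ifs <;> push_cast <;> ring

lemma sum_inv_pow_injective {R S : Finset ℕ}
    (h : ∑ k ∈ R, ((2:ℝ)^k)⁻¹ = ∑ k ∈ S, ((2:ℝ)^k)⁻¹) : R = S := by
  set N := (R ∪ S).sup id with hN
  have hR : ∀ k ∈ R, k ≤ N := fun k hk => Finset.le_sup (f := id) (Finset.mem_union_left _ hk)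
  have hS : ∀ k ∈ S, k ≤ N := fun k hk => Finset.le_sup (f := id) (Finset.mem_union_right _ hk)
  have key : ∀ (T : Finset ℕ), (∀ k ∈ T, k ≤ N) →
      (2:ℝ)^N * ∑ k ∈ T, ((2:ℝ)^k)⁻¹ = ((∑ k ∈ T.image (fun k => N - k), 2^k : ℕ) : ℝ) := by
    intro T hT
    rw [Finset.sum_image (by intro x hx y hy hxy; have := hT x hx; have := hT y hy; beta_reduce at hxy; omega)]
    rw [Finset.mul_sum]
    push_cast
    apply Finset.sum_congr rfl
    intro k hk
    have hkN := hT k hk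
    rw [pow_sub₀ (2:ℝ) (by norm_num) hkN]
  have h2 : ((∑ k ∈ R.image (fun k => N - k), 2^k : ℕ) : ℝ)
      = ((∑ k ∈ S.image (fun k => N - k), 2^k : ℕ) : ℝ) := by
    rw [← key R hR, ← key S hS, h]
  have h3 : R.image (fun k => N - k) = S.image (fun k => N - k) :=
    Finset.geomSum_injective le_rfl (by exact_mod_cast h2)
  have idem : ∀ (T : Finset ℕ), (∀ k ∈ T, k ≤ N) →
      (T.image (fun k => N - k)).image (fun k => N - k) = T := by
    intro T hT
    rw [Finset.image_image]
    have : ∀ x ∈ T, (fun k => N - k) ∘ (fun k => N - k) = id ∨ True := fun _ _ => Or.inr trivial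
    calc T.image ((fun k => N - k) ∘ (fun k => N - k))
        = T.image id := Finset.image_congr (fun x hx => by have := hT x hx; simp; omega)
      _ = T := Finset.image_id
  rw [← idem R hR, ← idem S hS, h3]

theorem distinct_exponent_sums_are_distinct (m d : ℕ)
    (W U : Fin d → Submodule (ZMod 2) (F m))
    (hW : StrictMono fun i => Module.finrank (ZMod 2) (W i))
    (hU : StrictMono fun i => Module.finrank (ZMod 2) (U i))
    (hsum : (fun a => ∑ i : Fin d, vSub (W i) a) = fun a => ∑ i : Fin d, vSub (U i) a) :
    W = U := by
  set rW := fun i => Module.finrank (ZMod 2) (W i) with hrW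
  set rU := fun i => Module.finrank (ZMod 2) (U i) with hrU
  have key : ∀ c₀ : F m,
      ((Finset.univ.filter (fun i : Fin d => c₀ ∈ W i)).image rW)
      = ((Finset.univ.filter (fun i : Fin d => c₀ ∈ U i)).image rU) := by
    intro c₀
    have h1 : ∑ a : F m, (∑ i : Fin d, vSub (W i) a) * had c₀ a
        = ∑ a : F m, (∑ i : Fin d, vSub (U i) a) * had c₀ a :=
      congrArg (fun f : F m → ℝ => ∑ a : F m, f a * had c₀ a) hsum
    have expand : ∀ (V : Fin d → Submodule (ZMod 2) (F m)),
        ∑ a : F m, (∑ i : Fin d, vSub (V i) a) * had c₀ a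
        = (2:ℝ)^m * ∑ i : Fin d, (if c₀ ∈ V i then ((2:ℝ) ^ Module.finrank (ZMod 2) (V i))⁻¹ else 0) := by
      intro V
      rw [Finset.mul_sum]
      calc ∑ a : F m, (∑ i : Fin d, vSub (V i) a) * had c₀ a
          = ∑ a : F m, ∑ i : Fin d, vSub (V i) a * had c₀ a := by
            apply Finset.sum_congr rfl; intro a _; rw [Finset.sum_mul]
        _ = ∑ i : Fin d, ∑ a : F m, vSub (V i) a * had c₀ a := Finset.sum_comm
        _ = _ := by
            apply Finset.sum_congr rfl; intro i _; rw [sum_vSub_had]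
    rw [expand W, expand U] at h1
    have h2 : ∑ i : Fin d, (if c₀ ∈ W i then ((2:ℝ) ^ rW i)⁻¹ else 0)
        = ∑ i : Fin d, (if c₀ ∈ U i then ((2:ℝ) ^ rU i)⁻¹ else 0) :=
      mul_left_cancel₀ (by positivity) h1
    apply sum_inv_pow_injective
    rw [Finset.sum_image (fun x hx y hy hxy => hW.injective hxy),
        Finset.sum_image (fun x hx y hy hxy => hU.injective hxy),
        Finset.sum_filter, Finset.sum_filter]
    exact h2
  -- deduce equal rank functions
  have hrank : rW = rU := by
    have h0 := key 0
    simp only [Submodule.zero_mem, Finset.filter_true, Finset.filter_true_of_mem,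
      fun i => Finset.mem_univ i] at h0
    have h0' : Finset.univ.image rW = Finset.univ.image rU := by
      simpa [Finset.filter_true_of_mem (fun i _ => (W i).zero_mem),
        Finset.filter_true_of_mem (fun i _ => (U i).zero_mem)] using key 0
    have hcard : (Finset.univ.image rW).card = d := by
      rw [Finset.card_image_of_injective _ hW.injective, Finset.card_univ, Fintype.card_fin]
    have e1 : rW = ((Finset.univ.image rW).orderEmbOfFin hcard : Fin d → ℕ) :=
      Finset.orderEmbOfFin_unique hcard (fun x => Finset.mem_image_of_mem _ (Finset.mem_univ x)) hW
    have e2 : rU = ((Finset.univ.image rW).orderEmbOfFin hcard : Fin d → ℕ) :=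
      Finset.orderEmbOfFin_unique hcard
        (fun x => h0' ▸ Finset.mem_image_of_mem _ (Finset.mem_univ x)) hU
    rw [e1, e2]
  funext i
  ext c₀
  have hk := key c₀
  rw [← hrank] at hk
  have hfilters : (Finset.univ.filter (fun i : Fin d => c₀ ∈ W i))
      = (Finset.univ.filter (fun i : Fin d => c₀ ∈ U i)) :=
    Finset.image_injective hW.injective hk
  constructor
  · intro hmem
    have : i ∈ Finset.univ.filter (fun i : Fin d => c₀ ∈ W i) := by
      simp [hmem]
    rw [hfilters] at this
    simpa using this
  · intro hmem
    have : i ∈ Finset.univ.filter (fun i : Fin d => c₀ ∈ U i) := by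
      simp [hmem]
    rw [← hfilters] at this
    simpa using this
end
end

section
/- Let n = 2^m, let P_0 ⊂ ℝ^{n−1} be the projected Hadamard simplex with vertex set V(P_0) ⊆ {−1,1}^{n−1}, |V(P_0)| = n. Fix integers c, D, d with 2cD² · log(4n) ≤ d². Then for every S ⊆ [n−1] with |S| = c, at least half the points of H_S[D] = (([−D,D] ∩ ℤ) \ {0})^S × {0}^{[n−1]∖S} lie in d·P_0. -/
open scoped BigOperators Classical Pointwise

noncomputable section

/-- Coordinates other than the one indexed by `0 ∈ 𝔽₂^m`. -/
abbrev Fstar (m : ℕ) := {a : F m // a ≠ 0}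

/-- Projection `ℝ^n → ℝ^(n-1)` deleting the coordinate indexed by `0`. -/
def proj {m : ℕ} (x : F m → ℝ) : Fstar m → ℝ := fun a => x a.1

/-! ### Auxiliary lemmas -/

def chi (x : ZMod 2) : ℝ := (-1 : ℝ) ^ x.val

lemma zmod2_cases (x : ZMod 2) : x = 0 ∨ x = 1 := by revert x; decide
lemma univ_zmod2 : (Finset.univ : Finset (ZMod 2)) = {0, 1} := rfl
lemma chi_zero : chi 0 = 1 := by simp [chi]
lemma chi_one : chi 1 = -1 := by rw [chi, ZMod.val_one]; simp
lemma two_eq_zero : (1 + 1 : ZMod 2) = 0 := by decide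

lemma chi_add (x y : ZMod 2) : chi (x + y) = chi x * chi y := by
  rcases zmod2_cases x with hx | hx <;> rcases zmod2_cases y with hy | hy <;>
    subst hx <;> subst hy <;>
    simp [chi_zero, chi_one, two_eq_zero]

lemma chi_sum {ι : Type*} (s : Finset ι) (f : ι → ZMod 2) :
    chi (∑ i ∈ s, f i) = ∏ i ∈ s, chi (f i) := by
  induction s using Finset.cons_induction with
  | empty => simpa using chi_zero
  | cons a s ha ih => rw [Finset.sum_cons, Finset.prod_cons, chi_add, ih]

lemma sum_chi_mul (x : ZMod 2) : (∑ t : ZMod 2, chi (x * t)) = if x = 0 then 2 else 0 := by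
  rw [univ_zmod2]
  rcases zmod2_cases x with hx | hx <;> subst hx <;>
    simp [chi_zero, chi_one]

lemma char_sum {m : ℕ} (v : F m) :
    (∑ c : F m, had c v) = if v = 0 then (2 : ℝ) ^ m else 0 := by
  have h1 : ∀ c : F m, had c v = ∏ i, chi (v i * c i) := by
    intro c; rw [had, show (-1:ℝ) ^ (dotF v c).val = chi (dotF v c) from rfl, dotF, chi_sum]
  calc (∑ c : F m, had c v) = ∑ c ∈ Fintype.piFinset (fun _ : Fin m => (Finset.univ : Finset (ZMod 2))), ∏ i, chi (v i * c i) := by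
        rw [Fintype.piFinset_univ]; exact Finset.sum_congr rfl fun c _ => h1 c
    _ = ∏ i, ∑ t : ZMod 2, chi (v i * t) := (Finset.prod_univ_sum (ι := Fin m) (κ := fun _ => ZMod 2) (fun _ => Finset.univ) (fun i t => chi (v i * t))).symm
    _ = ∏ i, if v i = 0 then (2:ℝ) else 0 := by simp only [sum_chi_mul]
    _ = if v = 0 then (2 : ℝ) ^ m else 0 := by
        by_cases hv : v = 0
        · simp [hv]
        · rw [if_neg hv]
          obtain ⟨i, hi⟩ : ∃ i, v i ≠ 0 := by
            by_contra h; push_neg at h; exact hv (funext h)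
          exact Finset.prod_eq_zero (Finset.mem_univ i) (if_neg hi)

lemma had_mul_had {m : ℕ} (c a b : F m) : had c a * had c b = had c (a + b) := by
  have hd : dotF (a + b) c = dotF a c + dotF b c := by
    simp [dotF, add_mul, Finset.sum_add_distrib]
  show chi (dotF a c) * chi (dotF b c) = chi (dotF (a+b) c)
  rw [hd, chi_add]

lemma orth {m : ℕ} (a b : F m) :
    (∑ c : F m, had c a * had c b) = if a = b then (2:ℝ) ^ m else 0 := by
  rw [Finset.sum_congr rfl fun c _ => had_mul_had c a b, char_sum]
  congr 1
  simp only [eq_iff_iff]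
  constructor
  · intro h; funext i
    have h2 : a i + b i = 0 := congrFun h i
    rcases zmod2_cases (a i) with h3 | h3 <;> rcases zmod2_cases (b i) with h4 | h4 <;>
      rw [h3, h4] <;> rw [h3, h4] at h2 <;> first | rfl | simpa [two_eq_zero] using h2
  · intro h; subst h; funext i
    show a i + a i = 0
    rcases zmod2_cases (a i) with h3 | h3 <;> rw [h3] <;> simp [two_eq_zero]

lemma card_F {m : ℕ} : (Fintype.card (F m)) = 2 ^ m := by
  simp [ZMod.card]

lemma had_sq {m : ℕ} (w b : F m) : had w b * had w b = 1 := by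
  rw [had, ← pow_add]
  exact Even.neg_one_pow ⟨_, rfl⟩

/-! ### Membership in the dilated polytope -/

lemma mem_dilate {m : ℕ} (d : ℕ) (hd : 0 < d) (y : Fstar m → ℝ)
    (hy : ∀ w : F m, -(d:ℝ) ≤ ∑ a : Fstar m, y a * had w a.1) :
    y ∈ (d : ℝ) • (proj '' Had m) := by
  have hn : (0:ℝ) < (2:ℝ)^m := by positivity
  have hdR : (0:ℝ) < d := by exact_mod_cast hd
  set μ : F m → ℝ := fun w => ((d:ℝ) + ∑ a : Fstar m, y a * had w a.1) / (d * 2^m) with hμ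
  have hμ0 : ∀ w, 0 ≤ μ w := fun w => div_nonneg (by linarith [hy w]) (by positivity)
  have hswap : (∑ w : F m, ∑ a : Fstar m, y a * had w a.1) = 0 := by
    rw [Finset.sum_comm]
    refine Finset.sum_eq_zero fun a _ => ?_
    have : (∑ w : F m, y a * had w a.1) = y a * ∑ w : F m, had w a.1 := by
      rw [Finset.mul_sum]
    rw [this, char_sum, if_neg a.2, mul_zero]
  have hμ1 : ∑ w : F m, μ w = 1 := by
    rw [hμ]
    rw [← Finset.sum_div, Finset.sum_add_distrib, hswap, add_zero,
      Finset.sum_const, Finset.card_univ, card_F, nsmul_eq_mul]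
    push_cast
    field_simp
  set z : F m → ℝ := ∑ w : F m, μ w • had w with hz
  have hzH : z ∈ Had m := by
    rw [Had, hz, ← Finset.centerMass_eq_of_sum_1 Finset.univ had hμ1]
    exact Finset.centerMass_mem_convexHull _ (fun w _ => hμ0 w) (by rw [hμ1]; norm_num)
      (fun w _ => Set.mem_range_self w)
  have hzval : ∀ a : Fstar m, z a.1 = y a / d := by
    intro a
    have h1 : z a.1 = ∑ w : F m, μ w * had w a.1 := by
      rw [hz, Finset.sum_apply]; rfl
    rw [h1]
    have h2 : ∀ w : F m, μ w * had w a.1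
        = ((d:ℝ) * had w a.1 + ∑ b : Fstar m, y b * (had w b.1 * had w a.1)) / (d * 2^m) := by
      intro w
      rw [hμ]
      rw [div_mul_eq_mul_div, add_mul, Finset.sum_mul]
      congr 2
      exact Finset.sum_congr rfl fun b _ => by ring
    rw [Finset.sum_congr rfl fun w _ => h2 w, ← Finset.sum_div, Finset.sum_add_distrib]
    have h3 : (∑ w : F m, (d:ℝ) * had w a.1) = 0 := by
      rw [← Finset.mul_sum, char_sum, if_neg a.2, mul_zero]
    have h4 : (∑ w : F m, ∑ b : Fstar m, y b * (had w b.1 * had w a.1))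
        = y a * 2 ^ m := by
      rw [Finset.sum_comm]
      have h5 : ∀ b : Fstar m, (∑ w : F m, y b * (had w b.1 * had w a.1))
          = y b * (if b = a then (2:ℝ)^m else 0) := by
        intro b
        rw [← Finset.mul_sum, orth]
        congr 2
        simp [Subtype.ext_iff]
      rw [Finset.sum_congr rfl fun b _ => h5 b]
      simp [Finset.sum_ite_eq']
    rw [h3, h4, zero_add]
    field_simp
  refine Set.mem_smul_set.2 ⟨proj z, ⟨z, hzH, rfl⟩, ?_⟩
  funext a
  show (d:ℝ) * z a.1 = y a
  rw [hzval a]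
  field_simp

/-! ### The Chernoff bound -/

lemma factor_bound (D : ℕ) (hD : 1 ≤ D) (u : ℝ) :
    (∑ v ∈ (Finset.Icc (-(D:ℤ)) D).erase 0, Real.exp (u * v))
      ≤ 2 * D * Real.exp (u^2 * D^2 / 2) := by
  set s₀ := (Finset.Icc (-(D:ℤ)) D).erase 0 with hs₀
  have hneg : ∀ v ∈ s₀, -v ∈ s₀ := by
    intro v hv
    simp only [hs₀, Finset.mem_erase, Finset.mem_Icc] at hv ⊢
    omega
  have hsym : (∑ v ∈ s₀, Real.exp (u * v)) = ∑ v ∈ s₀, Real.exp (-(u * v)) := by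
    refine Finset.sum_nbij' (fun v => -v) (fun v => -v) ?_ ?_ ?_ ?_ ?_
    · exact hneg
    · exact hneg
    · intro v _; ring
    · intro v _; ring
    · intro v hv; push_cast; ring_nf
  have hcosh : (∑ v ∈ s₀, Real.exp (u * v)) = ∑ v ∈ s₀, Real.cosh (u * v) := by
    have h2 : (2:ℝ) * ∑ v ∈ s₀, Real.exp (u * v)
        = ∑ v ∈ s₀, (Real.exp (u*v) + Real.exp (-(u*v))) := by
      rw [Finset.sum_add_distrib, ← hsym]; ring
    have h3 : ∀ v ∈ s₀, Real.exp (u*v) + Real.exp (-(u*v)) = 2 * Real.cosh (u*v) := by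
      intro v _; rw [Real.cosh_eq]; ring
    rw [Finset.sum_congr rfl h3] at h2
    have h4 : (2:ℝ) * ∑ v ∈ s₀, Real.exp (u * v) = 2 * ∑ v ∈ s₀, Real.cosh (u*v) := by
      rw [h2, Finset.mul_sum]
    linarith
  have hbound : ∀ v ∈ s₀, Real.cosh (u * v) ≤ Real.exp (u^2 * D^2 / 2) := by
    intro v hv
    refine (Real.cosh_le_exp_half_sq _).trans (Real.exp_le_exp.2 ?_)
    have hv2 : (v:ℝ)^2 ≤ (D:ℝ)^2 := by
      simp only [hs₀, Finset.mem_erase, Finset.mem_Icc] at hv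
      have h1 : |(v:ℝ)| ≤ (D:ℝ) := by
        rw [abs_le]; constructor <;> [exact_mod_cast hv.2.1; exact_mod_cast hv.2.2]
      calc (v:ℝ)^2 = |(v:ℝ)|^2 := (sq_abs _).symm
        _ ≤ (D:ℝ)^2 := by nlinarith [abs_nonneg (v:ℝ)]
    calc (u * v)^2 / 2 = u^2 * (v:ℝ)^2 / 2 := by ring
      _ ≤ u^2 * (D:ℝ)^2 / 2 := by nlinarith [sq_nonneg u]
  have hcard : s₀.card = 2 * D := by
    rw [hs₀, Finset.card_erase_of_mem (by simp [Finset.mem_Icc]), Int.card_Icc]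
    omega
  calc (∑ v ∈ s₀, Real.exp (u * v)) = ∑ v ∈ s₀, Real.cosh (u * v) := hcosh
    _ ≤ ∑ v ∈ s₀, Real.exp (u^2 * D^2 / 2) := Finset.sum_le_sum hbound
    _ = s₀.card * Real.exp (u^2 * D^2 / 2) := by rw [Finset.sum_const, nsmul_eq_mul]
    _ = 2 * D * Real.exp (u^2 * D^2 / 2) := by rw [hcard]; push_cast; ring

lemma card_s0 (D : ℕ) : ((Finset.Icc (-(D:ℤ)) D).erase 0).card = 2 * D := by
  rw [Finset.card_erase_of_mem (by simp [Finset.mem_Icc]), Int.card_Icc]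
  omega

lemma chernoff {m : ℕ} (S : Finset (Fstar m)) (c D d : ℕ)
    (hD : 1 ≤ D) (hc : 1 ≤ c) (hd : 1 ≤ d) (hS : S.card = c) (w : F m) :
    (((Fintype.piFinset fun i => if i ∈ S then (Finset.Icc (-(D:ℤ)) D).erase 0 else {0}).filter
        (fun x : Fstar m → ℤ => (∑ a : Fstar m, (x a : ℝ) * had w a.1) < -(d:ℝ))).card : ℝ)
      ≤ ((Fintype.piFinset fun i => if i ∈ S then (Finset.Icc (-(D:ℤ)) D).erase 0 else {0}).card : ℝ)
          * Real.exp (-(d:ℝ)^2 / (2*c*D^2)) := by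
  set s : Fstar m → Finset ℤ :=
    fun i => if i ∈ S then (Finset.Icc (-(D:ℤ)) D).erase 0 else {0} with hs
  set G := Fintype.piFinset s with hGdef
  set f : (Fstar m → ℤ) → ℝ := fun x => ∑ a : Fstar m, (x a : ℝ) * had w a.1 with hf
  have hcR : (0:ℝ) < c := by exact_mod_cast hc
  have hDR : (0:ℝ) < D := by exact_mod_cast hD
  have hdR : (0:ℝ) < d := by exact_mod_cast hd
  set t : ℝ := d / (c * D^2) with ht
  have ht0 : 0 < t := by positivity
  have h1 : ((G.filter (fun x => f x < -(d:ℝ))).card : ℝ)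
      ≤ ∑ x ∈ G, Real.exp (-(t * (f x + d))) := by
    rw [Finset.card_eq_sum_ones, Nat.cast_sum]
    refine le_trans (Finset.sum_le_sum ?_)
      (Finset.sum_le_sum_of_subset_of_nonneg (Finset.filter_subset _ _)
        (fun x _ _ => (Real.exp_pos _).le))
    intro x hx
    have hfx : f x < -(d:ℝ) := (Finset.mem_filter.1 hx).2
    have : (0:ℝ) ≤ -(t * (f x + d)) := by nlinarith
    simpa using Real.one_le_exp this
  have h2 : ∀ x : Fstar m → ℤ, Real.exp (-(t * (f x + d)))
      = Real.exp (-(t*d)) * ∏ a : Fstar m, Real.exp (-(t * had w a.1) * (x a : ℝ)) := by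
    intro x
    rw [← Real.exp_sum, ← Real.exp_add]
    congr 1
    simp only [hf]
    rw [mul_add, neg_add, Finset.mul_sum, add_comm]
    congr 1
    rw [← Finset.sum_neg_distrib]
    exact Finset.sum_congr rfl fun a _ => by ring
  have h3 : (∑ x ∈ G, ∏ a : Fstar m, Real.exp (-(t * had w a.1) * (x a : ℝ)))
      = ∏ a : Fstar m, ∑ v ∈ s a, Real.exp (-(t * had w a.1) * (v : ℝ)) :=
    (Finset.prod_univ_sum (ι := Fstar m) (κ := fun _ => ℤ) s
      (fun a v => Real.exp (-(t * had w a.1) * (v : ℝ)))).symm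
  set Fac : Fstar m → ℝ := fun a => ∑ v ∈ s a, Real.exp (-(t * had w a.1) * (v : ℝ)) with hFac
  have hFacOff : ∀ a ∉ S, Fac a = 1 := by
    intro a ha
    rw [hFac]
    simp only [hs, if_neg ha]
    simp
  have h4 : (∏ a : Fstar m, Fac a) = ∏ a ∈ S, Fac a :=
    (Finset.prod_subset (Finset.subset_univ S) (fun a _ ha => hFacOff a ha)).symm
  have hFacPos : ∀ a, 0 ≤ Fac a :=
    fun a => Finset.sum_nonneg fun v _ => (Real.exp_pos _).le
  have h5 : ∀ a ∈ S, Fac a ≤ 2 * D * Real.exp (t^2 * D^2 / 2) := by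
    intro a ha
    rw [hFac]
    simp only [hs, if_pos ha]
    have hfb := factor_bound D hD (-(t * had w a.1))
    have hsq : (-(t * had w a.1))^2 = t^2 := by
      have h := had_sq w a.1
      calc (-(t * had w a.1))^2 = t^2 * (had w a.1 * had w a.1) := by ring
        _ = t^2 := by rw [h, mul_one]
    rw [hsq] at hfb
    exact hfb
  have h6 : (∏ a ∈ S, Fac a) ≤ (2 * D * Real.exp (t^2 * D^2 / 2)) ^ c := by
    rw [← hS, ← Finset.prod_const]
    exact Finset.prod_le_prod (fun a _ => hFacPos a) h5
  have h7 : (G.card : ℝ) = (2 * D : ℝ) ^ c := by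
    rw [hGdef, Fintype.card_piFinset]
    have : (∏ a : Fstar m, (s a).card) = ∏ a ∈ S, (s a).card :=
      (Finset.prod_subset (Finset.subset_univ S) (fun a _ ha => by
        simp only [hs, if_neg ha]; simp)).symm
    rw [this]
    have : ∀ a ∈ S, (s a).card = 2 * D := fun a ha => by
      simp only [hs, if_pos ha]; exact card_s0 D
    rw [Finset.prod_congr rfl this, Finset.prod_const, hS]
    push_cast; ring
  have key : ((G.filter (fun x => f x < -(d:ℝ))).card : ℝ)
      ≤ (2 * D : ℝ)^c * (Real.exp (-(t*d)) * Real.exp (t^2 * D^2 / 2)^c) := by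
    calc ((G.filter (fun x => f x < -(d:ℝ))).card : ℝ)
        ≤ ∑ x ∈ G, Real.exp (-(t * (f x + d))) := h1
      _ = Real.exp (-(t*d)) * ∑ x ∈ G, ∏ a : Fstar m, Real.exp (-(t * had w a.1) * (x a : ℝ)) := by
          rw [Finset.mul_sum]; exact Finset.sum_congr rfl fun x _ => h2 x
      _ = Real.exp (-(t*d)) * ∏ a ∈ S, Fac a := by rw [h3, ← hFac, h4]
      _ ≤ Real.exp (-(t*d)) * ((2 * D * Real.exp (t^2 * D^2 / 2)) ^ c) := by
          refine mul_le_mul_of_nonneg_left h6 (Real.exp_pos _).le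
      _ = (2 * D : ℝ)^c * (Real.exp (-(t*d)) * Real.exp (t^2 * D^2 / 2)^c) := by
          rw [mul_pow]; ring
  have hexp : Real.exp (-(t*d)) * Real.exp (t^2 * D^2 / 2)^c
      = Real.exp (-(d:ℝ)^2 / (2*c*D^2)) := by
    rw [← Real.exp_nat_mul, ← Real.exp_add]
    congr 1
    rw [ht]
    field_simp
    ring
  calc ((Fintype.piFinset s).filter (fun x => f x < -(d:ℝ))).card
      ≤ ((2:ℝ) * D)^c * (Real.exp (-(t*d)) * Real.exp (t^2 * D^2 / 2)^c) := key
    _ = (G.card : ℝ) * Real.exp (-(d:ℝ)^2 / (2*c*D^2)) := by rw [h7, hexp]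

/-! ### Main theorem -/

theorem half_of_grid_in_dilate (m : ℕ) (P0 : Set (Fstar m → ℝ))
    (hP0 : P0 = proj '' Had m)
    (c D d : ℕ) (hD : 1 ≤ D)
    (hcd : 2 * c * D ^ 2 * Real.log (4 * 2 ^ m) ≤ (d : ℝ) ^ 2)
    (S : Finset (Fstar m)) (hS : S.card = c)
    (G : Finset (Fstar m → ℤ))
    (hG : G = Fintype.piFinset fun i =>
      if i ∈ S then (Finset.Icc (-(D : ℤ)) D).erase 0 else {0}) :
    G.card ≤ 2 * (G.filter fun x => (fun a => (x a : ℝ)) ∈ (d : ℝ) • P0).card := by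
  subst hP0
  subst hG
  set s : Fstar m → Finset ℤ :=
    fun i => if i ∈ S then (Finset.Icc (-(D:ℤ)) D).erase 0 else {0} with hs
  set G := Fintype.piFinset s with hGdef
  have hlog : 0 < Real.log (4 * 2 ^ m) := by
    apply Real.log_pos
    have : (1:ℝ) ≤ 2 ^ m := one_le_pow₀ (by norm_num)
    nlinarith
  -- the zero vector is in every dilate
  have hzero_mem : ∀ e : ℕ, (fun _ : Fstar m => (0:ℝ)) ∈ (e : ℝ) • (proj '' Had m) := by
    intro e
    set μ : F m → ℝ := fun _ => ((2:ℝ)^m)⁻¹ with hμ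
    have hn : (0:ℝ) < (2:ℝ)^m := by positivity
    have hμ1 : ∑ w : F m, μ w = 1 := by
      rw [hμ, Finset.sum_const, Finset.card_univ, card_F, nsmul_eq_mul]
      push_cast
      field_simp
    set z : F m → ℝ := ∑ w : F m, μ w • had w with hz
    have hzH : z ∈ Had m := by
      rw [Had, hz, ← Finset.centerMass_eq_of_sum_1 Finset.univ had hμ1]
      exact Finset.centerMass_mem_convexHull _ (fun w _ => by positivity) (by rw [hμ1]; norm_num)
        (fun w _ => Set.mem_range_self w)
    have hzval : ∀ a : Fstar m, z a.1 = 0 := by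
      intro a
      have h1 : z a.1 = ∑ w : F m, μ w * had w a.1 := by
        rw [hz, Finset.sum_apply]; rfl
      rw [h1, hμ]
      rw [← Finset.mul_sum, char_sum, if_neg a.2, mul_zero]
    refine Set.mem_smul_set.2 ⟨proj z, ⟨z, hzH, rfl⟩, ?_⟩
    funext a
    show (e:ℝ) * z a.1 = 0
    rw [hzval a, mul_zero]
  by_cases hc : c = 0
  · -- degenerate case: S = ∅, every point of G is zero
    have hSempty : S = ∅ := Finset.card_eq_zero.1 (hS.trans hc)
    have hall : ∀ x ∈ G, (fun a => ((x a : ℤ) : ℝ)) ∈ (d : ℝ) • (proj '' Had m) := by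
      intro x hx
      have hx0 : ∀ a, x a = 0 := by
        intro a
        have := Fintype.mem_piFinset.1 hx a
        rw [hs] at this
        simp only [hSempty, Finset.notMem_empty, if_false, Finset.mem_singleton] at this
        exact this
      have : (fun a => ((x a : ℤ) : ℝ)) = (fun _ : Fstar m => (0:ℝ)) := by
        funext a; rw [hx0 a]; norm_num
      rw [this]
      exact hzero_mem d
    rw [Finset.filter_true_of_mem hall]
    omega
  · -- main case
    have hc1 : 1 ≤ c := Nat.one_le_iff_ne_zero.2 hc
    have hcR : (0:ℝ) < c := by exact_mod_cast hc1
    have hDR : (0:ℝ) < D := by exact_mod_cast hD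
    have hd1 : 1 ≤ d := by
      by_contra hdc
      have hd0 : d = 0 := by omega
      rw [hd0] at hcd
      push_cast at hcd
      have hpos : (0:ℝ) < 2*(c:ℝ)*(D:ℝ)^2 := by positivity
      nlinarith [mul_pos hpos hlog]
    have hdR : (0:ℝ) < d := by exact_mod_cast hd1
    -- exponential bound
    have hexp_le : Real.exp (-(d:ℝ)^2 / (2*c*D^2)) ≤ ((4:ℝ) * 2^m)⁻¹ := by
      have hpos : (0:ℝ) < 2*c*D^2 := by positivity
      have h1 : Real.log (4 * 2^m) ≤ (d:ℝ)^2 / (2*c*D^2) := by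
        rw [le_div_iff₀ hpos]
        calc Real.log (4 * 2^m) * (2*c*D^2) = 2*c*D^2 * Real.log (4 * 2^m) := by ring
          _ ≤ (d:ℝ)^2 := hcd
      have h2 : -(d:ℝ)^2 / (2*c*D^2) ≤ -Real.log (4 * 2^m) := by
        rw [neg_div]
        linarith
      calc Real.exp (-(d:ℝ)^2 / (2*c*D^2)) ≤ Real.exp (-Real.log (4 * 2^m)) :=
            Real.exp_le_exp.2 h2
        _ = ((4:ℝ) * 2^m)⁻¹ := by
            rw [Real.exp_neg, Real.exp_log (by positivity)]
    -- union bound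
    set badAll := G.filter
      (fun x => ∃ w : F m, (∑ a : Fstar m, (x a : ℝ) * had w a.1) < -(d:ℝ)) with hbadAll
    have hbad_card : (badAll.card : ℝ) ≤ (G.card : ℝ) / 4 := by
      have hsub : badAll ⊆ Finset.univ.biUnion
          (fun w : F m => G.filter (fun x => (∑ a : Fstar m, (x a : ℝ) * had w a.1) < -(d:ℝ))) := by
        intro x hx
        obtain ⟨hxG, w, hw⟩ := Finset.mem_filter.1 hx
        exact Finset.mem_biUnion.2 ⟨w, Finset.mem_univ w, Finset.mem_filter.2 ⟨hxG, hw⟩⟩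
      have h1 : (badAll.card : ℝ) ≤ ∑ w : F m,
          ((G.filter (fun x => (∑ a : Fstar m, (x a : ℝ) * had w a.1) < -(d:ℝ))).card : ℝ) := by
        have := (Finset.card_le_card hsub).trans (Finset.card_biUnion_le)
        exact_mod_cast this
      have h2 : ∀ w : F m,
          ((G.filter (fun x => (∑ a : Fstar m, (x a : ℝ) * had w a.1) < -(d:ℝ))).card : ℝ)
          ≤ (G.card : ℝ) * Real.exp (-(d:ℝ)^2 / (2*c*D^2)) :=
        fun w => chernoff S c D d hD hc1 hd1 hS w
      have h3 : (badAll.card : ℝ) ≤ (2:ℝ)^m * ((G.card : ℝ) * Real.exp (-(d:ℝ)^2 / (2*c*D^2))) := by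
        calc (badAll.card : ℝ) ≤ ∑ w : F m, ((G.filter (fun x => (∑ a : Fstar m, (x a : ℝ) * had w a.1) < -(d:ℝ))).card : ℝ) := h1
          _ ≤ ∑ w : F m, (G.card : ℝ) * Real.exp (-(d:ℝ)^2 / (2*c*D^2)) := Finset.sum_le_sum (fun w _ => h2 w)
          _ = (2:ℝ)^m * ((G.card : ℝ) * Real.exp (-(d:ℝ)^2 / (2*c*D^2))) := by
              rw [Finset.sum_const, Finset.card_univ, card_F, nsmul_eq_mul]; push_cast; ring
      have hGnn : (0:ℝ) ≤ (G.card : ℝ) := Nat.cast_nonneg _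
      have h4 : (2:ℝ)^m * ((G.card : ℝ) * Real.exp (-(d:ℝ)^2 / (2*c*D^2)))
          ≤ (2:ℝ)^m * ((G.card : ℝ) * ((4:ℝ) * 2^m)⁻¹) := by
        apply mul_le_mul_of_nonneg_left _ (by positivity)
        exact mul_le_mul_of_nonneg_left hexp_le hGnn
      have h5 : (2:ℝ)^m * ((G.card : ℝ) * ((4:ℝ) * 2^m)⁻¹) = (G.card : ℝ) / 4 := by
        have hn : (0:ℝ) < (2:ℝ)^m := by positivity
        field_simp
      linarith
    -- the complement of the bad set is good
    have hgood_sub : G.filter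
        (fun x => ¬ ∃ w : F m, (∑ a : Fstar m, (x a : ℝ) * had w a.1) < -(d:ℝ))
        ⊆ G.filter (fun x => (fun a => (x a : ℝ)) ∈ (d : ℝ) • (proj '' Had m)) := by
      intro x hx
      obtain ⟨hxG, hxP⟩ := Finset.mem_filter.1 hx
      push_neg at hxP
      refine Finset.mem_filter.2 ⟨hxG, ?_⟩
      exact mem_dilate d hd1 (fun a => (x a : ℝ)) (fun w => hxP w)
    have hcompl : (G.filter
        (fun x => ¬ ∃ w : F m, (∑ a : Fstar m, (x a : ℝ) * had w a.1) < -(d:ℝ))).card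
        = G.card - badAll.card := by
      rw [hbadAll, Finset.filter_not, Finset.card_sdiff_of_subset (Finset.filter_subset _ _)]
    have hbadAll_le : badAll.card ≤ G.card :=
      Finset.card_le_card (Finset.filter_subset _ _)
    set good := G.filter (fun x => (fun a => (x a : ℝ)) ∈ (d : ℝ) • (proj '' Had m)) with hgood
    have hgood_ge : (G.card : ℝ) - (badAll.card : ℝ) ≤ (good.card : ℝ) := by
      have h1 := Finset.card_le_card hgood_sub
      rw [hcompl] at h1
      have : ((G.card - badAll.card : ℕ) : ℝ) = (G.card : ℝ) - (badAll.card : ℝ) := by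
        rw [Nat.cast_sub hbadAll_le]
      rw [← this]
      exact_mod_cast h1
    have final : (G.card : ℝ) ≤ 2 * (good.card : ℝ) := by linarith
    exact_mod_cast final
end
end
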